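/- (Theorem 2, extremal polynomial.) Let A, B be real numbers, λ > 0, and let n, s be positive integers. The function p_{n−1}^{(λ,s)}(z) := τ_n(z, ā) · S_n(R_{n,s}^{λ})(z) coincides with a polynomial of degree at most n−1 in z, and it attains the infimum defining the best weighted approximation: ∫_{-∞}^{∞} |K_{λ,s}(t) − p_{n−1}^{(λ,s)}(t)|² |ρ_n(t)|^{−2} dt = inf over polynomials p with complex coefficients of degree ≤ n−1 of ∫_{-∞}^{∞} |K_{λ,s}(t) − p(t)|² |ρ_n(t)|^{−2} dt. -/

import Mathlib

/-!
The `Φ_j` are orthogonal on `ℝ` with `∫ |Φ_j|² = π`: the diagonal integrands are Cauchy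
densities, and for `j < k` the product `Φ_j · conj Φ_k` continues holomorphically to the closed
lower half-plane with `O(|z|⁻²)` decay, so its integral vanishes by Cauchy's theorem. The
numerators `τ_n(·, ā) Φ_j`, `j < n`, are polynomials of degree `< n`, linearly independent by
orthogonality, hence a basis of the polynomials of degree `< n`. On `ℝ`, `K = τ_n(·, ā) R` and
`|τ_n(t, ā)| = |τ_n(t, a)|`, so the weighted error of `τ_n(·, ā) Σ c_j Φ_j` is
`|ρ₀|⁻² ∫ |R - Σ c_j Φ_j|²`, which the orthogonal projection `c_j = R̂(j)` minimises.
-/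

open MeasureTheory Complex

/-- χ_k := |1 + a_k²| / (1 + a_k²).  (0-based indexing: `a k` is the paper's a_{k+1}.) -/
noncomputable def chi (a : ℕ → ℂ) (k : ℕ) : ℂ :=
  (‖1 + a k ^ 2‖ : ℂ) / (1 + a k ^ 2)

/-- Blaschke product: `Blaschke a j` is the paper's B_{j+1}, i.e. the product over the
first `j` points (so `Blaschke a 0 = 1 = B₁`). -/
noncomputable def Blaschke (a : ℕ → ℂ) (j : ℕ) (z : ℂ) : ℂ :=
  ∏ k ∈ Finset.range j, chi a k * (z - a k) / (z - starRingEnd ℂ (a k))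

/-- Takenaka–Malmqvist function: `Phi a j` is the paper's Φ_{j+1}. -/
noncomputable def Phi (a : ℕ → ℂ) (j : ℕ) (z : ℂ) : ℂ :=
  (Real.sqrt ((a j).im) : ℂ) * Blaschke a j z / (z - starRingEnd ℂ (a j))

/-- τ_n(z, b) := ∏_{k=1}^n (z − b_k). -/
noncomputable def tau (n : ℕ) (z : ℂ) (b : ℕ → ℂ) : ℂ :=
  ∏ k ∈ Finset.range n, (z - b k)

/-- ν_m(z, b) := Σ_{k₁+⋯+k_n = m} ∏_{j=1}^n (z − b_j)^{−k_j}. -/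
noncomputable def nu (n m : ℕ) (z : ℂ) (b : ℕ → ℂ) : ℂ :=
  ∑ k ∈ Finset.Nat.antidiagonalTuple n m, ∏ j : Fin n, ((z - b (j : ℕ)) ^ (k j))⁻¹

/-- R_{n,s}^λ(z) := (A + Bz) / ((z² + λ²)^{s+1} τ_n(z, ā)). -/
noncomputable def Rker (A B : ℂ) (lam : ℝ) (n s : ℕ) (a : ℕ → ℂ) (z : ℂ) : ℂ :=
  (A + B * z) / ((z ^ 2 + (lam : ℂ) ^ 2) ^ (s + 1) * tau n z (fun k => starRingEnd ℂ (a k)))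

/-- Partial Fourier sum S_n(R_{n,s}^λ)(z) := Σ_{j=1}^n R̂(j) Φ_j(z), where
R̂(j) := (1/π) ∫ R_{n,s}^λ(t) conj(Φ_j(t)) dt. -/
noncomputable def Sn (A B : ℂ) (lam : ℝ) (n s : ℕ) (a : ℕ → ℂ) (z : ℂ) : ℂ :=
  ∑ j ∈ Finset.range n,
    ((1 / Real.pi : ℂ) * ∫ t : ℝ, Rker A B lam n s a t * starRingEnd ℂ (Phi a j t)) *
      Phi a j z

/-- D_l := Σ_{j=0}^{s−l} [(2iλ)^{s−j} C(s+j,s) ν_{s−l−j}(iλ, ā) / ((2λ)^{2s+1} τ_n(iλ, ā))]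
· (Bλ(s(s+j) − 2j)/(s(s+j)) − iA). -/
noncomputable def Dcoef (A B : ℂ) (lam : ℝ) (n s : ℕ) (a : ℕ → ℂ) (l : ℕ) : ℂ :=
  ∑ j ∈ Finset.range (s - l + 1),
    (2 * I * (lam : ℂ)) ^ (s - j) * ((s + j).choose s : ℂ) *
        nu n (s - l - j) (I * lam) (fun k => starRingEnd ℂ (a k)) /
      ((2 * (lam : ℂ)) ^ (2 * s + 1) * tau n (I * lam) (fun k => starRingEnd ℂ (a k))) *
      (B * lam * ((s : ℂ) * ((s : ℂ) + (j : ℂ)) - 2 * (j : ℂ)) /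
          ((s : ℂ) * ((s : ℂ) + (j : ℂ))) -
        I * A)

/-- The kernel K_{λ,s}(z) := (A + Bz)/(z² + λ²)^{s+1}. -/
noncomputable def Kker (A B : ℂ) (lam : ℝ) (s : ℕ) (z : ℂ) : ℂ :=
  (A + B * z) / (z ^ 2 + (lam : ℂ) ^ 2) ^ (s + 1)

open Finset Filter ProbabilityTheory
open scoped ComplexConjugate

section CauchyWeight

lemma sq_norm_ofReal_sub (c : ℂ) (t : ℝ) : ‖(t : ℂ) - c‖ ^ 2 = (t - c.re) ^ 2 + c.im ^ 2 := by
  rw [Complex.sq_norm, Complex.normSq_apply]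
  simp only [Complex.sub_re, Complex.ofReal_re, Complex.sub_im, Complex.ofReal_im]
  ring

lemma inv_norm_sub_sq_eq_cauchyPDFReal {c : ℂ} (hc : c.im ≠ 0) (t : ℝ) :
    (‖(t : ℂ) - c‖ ^ 2)⁻¹ = Real.pi / |c.im| * cauchyPDFReal c.re ‖c.im‖₊ t := by
  rw [sq_norm_ofReal_sub, cauchyPDFReal_def, coe_nnnorm, Real.norm_eq_abs, sq_abs]
  have : 0 < |c.im| := abs_pos.2 hc
  field_simp

lemma integrable_inv_norm_sub_sq {c : ℂ} (hc : c.im ≠ 0) :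
    Integrable fun t : ℝ => (‖(t : ℂ) - c‖ ^ 2)⁻¹ := by
  simp_rw [inv_norm_sub_sq_eq_cauchyPDFReal hc]
  exact (integrable_cauchyPDFReal _).const_mul _

lemma integral_inv_norm_sub_sq {c : ℂ} (hc : c.im ≠ 0) :
    ∫ t : ℝ, (‖(t : ℂ) - c‖ ^ 2)⁻¹ = Real.pi / |c.im| := by
  simp_rw [inv_norm_sub_sq_eq_cauchyPDFReal hc, integral_const_mul,
    integral_cauchyPDFReal_eq_one _ (nnnorm_ne_zero_iff.2 hc), mul_one]

lemma memLp_two_of_norm_sq_le {g : ℝ → ℂ} (hg : Continuous g) {c : ℂ} (hc : c.im ≠ 0) {D : ℝ}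
    (hD : ∀ t : ℝ, ‖g t‖ ^ 2 ≤ D * (‖(t : ℂ) - c‖ ^ 2)⁻¹) : MemLp g 2 := by
  refine (memLp_two_iff_integrable_sq_norm hg.aestronglyMeasurable).2 ?_
  refine ((integrable_inv_norm_sub_sq hc).const_mul D).mono'
    (hg.norm.pow 2).aestronglyMeasurable (Eventually.of_forall fun t => ?_)
  rw [Real.norm_of_nonneg (by positivity)]
  exact hD t

end CauchyWeight

section OrthogonalProjection

variable {α ι : Type*} [MeasurableSpace α] {μ : Measure α}

lemma MeasureTheory.MemLp.integrable_mul_conj {f g : α → ℂ} (hf : MemLp f 2 μ) (hg : MemLp g 2 μ) :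
    Integrable (fun x => f x * conj (g x)) μ :=
  hf.integrable_mul (q := 2) hg.star

lemma integral_norm_add_sq_of_orthogonal {u v : α → ℂ} (hu : MemLp u 2 μ) (hv : MemLp v 2 μ)
    (huv : ∫ x, u x * conj (v x) ∂μ = 0) :
    ∫ x, ‖u x + v x‖ ^ 2 ∂μ = ∫ x, ‖u x‖ ^ 2 ∂μ + ∫ x, ‖v x‖ ^ 2 ∂μ := by
  have hpt : ∀ x, ‖u x + v x‖ ^ 2 = ‖u x‖ ^ 2 + ‖v x‖ ^ 2 + 2 * (u x * conj (v x)).re := by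
    intro x
    simp only [← Complex.normSq_eq_norm_sq, Complex.normSq_add]
  have hu2 := hu.integrable_norm_pow two_ne_zero
  have hv2 := hv.integrable_norm_pow two_ne_zero
  have hre : ∫ x, (u x * conj (v x)).re ∂μ = 0 := by
    simpa [huv] using integral_re (hu.integrable_mul_conj hv)
  have hsq : Integrable (fun x => ‖u x‖ ^ 2 + ‖v x‖ ^ 2) μ := hu2.add hv2
  have hcross : Integrable (fun x => 2 * (u x * conj (v x)).re) μ :=
    (hu.integrable_mul_conj hv).re.const_mul 2
  simp_rw [hpt]
  rw [integral_add hsq hcross, integral_add hu2 hv2, integral_const_mul, hre]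
  ring

variable [DecidableEq ι] {φ : ι → α → ℂ} {s : Finset ι} {w : ℂ}

lemma integral_sum_mul_conj_of_orthogonal (hφ : ∀ i ∈ s, MemLp (φ i) 2 μ)
    (horth : ∀ i ∈ s, ∀ k ∈ s, ∫ x, φ i x * conj (φ k x) ∂μ = if i = k then w else 0)
    (c : ι → ℂ) {k : ι} (hk : k ∈ s) :
    ∫ x, (∑ i ∈ s, c i * φ i x) * conj (φ k x) ∂μ = c k * w := by
  simp_rw [Finset.sum_mul, mul_assoc]
  rw [integral_finsetSum _ fun i hi => ((hφ i hi).integrable_mul_conj (hφ k hk)).const_mul _]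
  simp_rw [integral_const_mul]
  rw [Finset.sum_congr rfl fun i hi => by rw [horth i hi k hk]]
  simp [hk]

theorem integral_norm_sub_sum_sq_le_of_orthogonal (hw : w ≠ 0) {f : α → ℂ} (hf : MemLp f 2 μ)
    (hφ : ∀ i ∈ s, MemLp (φ i) 2 μ)
    (horth : ∀ i ∈ s, ∀ k ∈ s, ∫ x, φ i x * conj (φ k x) ∂μ = if i = k then w else 0)
    (c : ι → ℂ) :
    ∫ x, ‖f x - ∑ i ∈ s, (w⁻¹ * ∫ y, f y * conj (φ i y) ∂μ) * φ i x‖ ^ 2 ∂μ ≤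
      ∫ x, ‖f x - ∑ i ∈ s, c i * φ i x‖ ^ 2 ∂μ := by
  set ĉ : ι → ℂ := fun i => w⁻¹ * ∫ y, f y * conj (φ i y) ∂μ
  have hsum : ∀ d : ι → ℂ, MemLp (fun x => ∑ i ∈ s, d i * φ i x) 2 μ := fun d =>
    memLp_finsetSum s fun i hi => (hφ i hi).const_mul (d i)
  have hu : MemLp (fun x => f x - ∑ i ∈ s, ĉ i * φ i x) 2 μ := hf.sub (hsum ĉ)
  have hres : ∀ k ∈ s, ∫ x, (f x - ∑ i ∈ s, ĉ i * φ i x) * conj (φ k x) ∂μ = 0 := by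
    intro k hk
    simp_rw [sub_mul]
    rw [integral_sub (hf.integrable_mul_conj (hφ k hk)) ((hsum ĉ).integrable_mul_conj (hφ k hk)),
      integral_sum_mul_conj_of_orthogonal hφ horth ĉ hk, sub_eq_zero]
    simp only [ĉ]
    field_simp
  have horth_uv : ∫ x, (f x - ∑ i ∈ s, ĉ i * φ i x) *
      conj (∑ i ∈ s, (ĉ i - c i) * φ i x) ∂μ = 0 := by
    simp_rw [map_sum, map_mul, Finset.mul_sum, mul_left_comm _ (conj (ĉ _ - c _))]
    rw [integral_finsetSum _ fun k hk => (hu.integrable_mul_conj (hφ k hk)).const_mul _]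
    exact Finset.sum_eq_zero fun k hk => by rw [integral_const_mul, hres k hk, mul_zero]
  have hsplit : ∀ x, f x - ∑ i ∈ s, c i * φ i x =
      (f x - ∑ i ∈ s, ĉ i * φ i x) + ∑ i ∈ s, (ĉ i - c i) * φ i x := by
    intro x
    simp only [sub_mul, Finset.sum_sub_distrib]
    ring
  simp_rw [hsplit]
  rw [integral_norm_add_sq_of_orthogonal hu (hsum _) horth_uv]
  exact le_add_of_nonneg_right (integral_nonneg fun x => by positivity)

end OrthogonalProjection

section LowerHalfPlane

variable {f : ℂ → ℂ}

lemma norm_intervalIntegral_le_of_lowerHalfPlane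
    (hd : ∀ z : ℂ, z.im ≤ 0 → DifferentiableAt ℂ f z) {R M : ℝ} (hR : 0 ≤ R)
    (hM : ∀ z : ℂ, z.im ≤ 0 → R ≤ ‖z‖ → ‖f z‖ ≤ M) :
    ‖∫ x in (-R)..R, f x‖ ≤ 4 * R * M := by
  -- Cauchy's theorem on `[-R, R] × [-R, 0]`, whose other three sides lie outside the open disc
  -- of radius `R`
  have hrect := Complex.integral_boundary_rect_eq_zero_of_differentiableOn f ⟨-R, -R⟩ ⟨R, 0⟩
    fun z hz => (hd z (by
      have := (Complex.mem_reProdIm.1 hz).2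
      rw [Set.uIcc_of_le (by linarith)] at this
      exact this.2)).differentiableWithinAt
  simp only [Complex.ofReal_zero, zero_mul, add_zero, smul_eq_mul] at hrect
  have hbottom : ‖∫ x in (-R)..R, f (x + (-R : ℝ) * I)‖ ≤ M * |R - -R| :=
    intervalIntegral.norm_integral_le_of_norm_le_const fun x _ => hM _ (by simp [hR])
      (by simpa [abs_of_nonneg hR] using Complex.abs_im_le_norm (x + (-R : ℝ) * I))
  have hside : ∀ x₀ : ℝ, |x₀| = R →
      ‖I * ∫ y in (-R)..0, f (x₀ + y * I)‖ ≤ M * |0 - -R| := fun x₀ hx₀ => by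
    rw [norm_mul, Complex.norm_I, one_mul]
    refine intervalIntegral.norm_integral_le_of_norm_le_const fun y hy => hM _ ?_ ?_
    · rw [Set.uIoc_of_le (by linarith)] at hy
      simpa using hy.2
    · simpa [hx₀] using Complex.abs_re_le_norm (x₀ + y * I)
  have hright := hside R (abs_of_nonneg hR)
  have hleft := hside (-R) (by rw [abs_neg, abs_of_nonneg hR])
  have heq : ∫ x in (-R)..R, f x = (∫ x in (-R)..R, f (x + (-R : ℝ) * I)) +
      I * (∫ y in (-R)..0, f (R + y * I)) - I * ∫ y in (-R)..0, f ((-R : ℝ) + y * I) := by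
    linear_combination -hrect
  rw [heq]
  calc _ ≤ ‖∫ x in (-R)..R, f (x + (-R : ℝ) * I)‖ + ‖I * ∫ y in (-R)..0, f (R + y * I)‖ +
        ‖I * ∫ y in (-R)..0, f ((-R : ℝ) + y * I)‖ := norm_sub_le_of_le (norm_add_le _ _) le_rfl
    _ ≤ M * |R - -R| + M * |0 - -R| + M * |0 - -R| := by gcongr
    _ = 4 * R * M := by
      rw [sub_neg_eq_add, zero_sub, neg_neg, abs_of_nonneg hR, abs_of_nonneg (by linarith)]
      ring

theorem integral_eq_zero_of_lowerHalfPlane (hd : ∀ z : ℂ, z.im ≤ 0 → DifferentiableAt ℂ f z)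
    (hf : Integrable fun t : ℝ => f t) {C R₀ : ℝ}
    (hC : ∀ z : ℂ, z.im ≤ 0 → R₀ ≤ ‖z‖ → ‖f z‖ ≤ C / ‖z‖ ^ 2) :
    ∫ t : ℝ, f t = 0 := by
  have hbound : ∀ᶠ R in atTop, ‖∫ x in (-R)..R, f x‖ ≤ 4 * |C| / R := by
    filter_upwards [eventually_ge_atTop R₀, eventually_gt_atTop 0] with R hR₀R hR
    calc _ ≤ 4 * R * (|C| / R ^ 2) := norm_intervalIntegral_le_of_lowerHalfPlane hd hR.le
          fun z hz hzR => (hC z hz (hR₀R.trans hzR)).trans <|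
            (div_le_div_of_nonneg_right (le_abs_self C) (sq_nonneg _)).trans
              (div_le_div_of_nonneg_left (abs_nonneg C) (by positivity) (by gcongr))
      _ = 4 * |C| / R := by field_simp
  exact tendsto_nhds_unique
    (intervalIntegral_tendsto_integral hf tendsto_neg_atTop_atBot tendsto_id)
    (squeeze_zero_norm' hbound (tendsto_const_nhds.div_atTop tendsto_id))

end LowerHalfPlane

section Takenaka

variable {a : ℕ → ℂ}

lemma ofReal_sub_ne_zero {c : ℂ} (hc : c.im ≠ 0) (t : ℝ) : (t : ℂ) - c ≠ 0 := fun h =>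
  hc (by simpa using congrArg Complex.im h)

lemma tau_conj_ofReal_ne_zero (ha : ∀ k, 0 < (a k).im) (n : ℕ) (t : ℝ) :
    tau n t (fun k => conj (a k)) ≠ 0 :=
  prod_ne_zero_iff.2 fun k _ => ofReal_sub_ne_zero (by simpa using (ha k).ne') t

lemma ofReal_ne_conj (ha : ∀ k, 0 < (a k).im) (t : ℝ) (k : ℕ) : (t : ℂ) ≠ conj (a k) :=
  sub_ne_zero.1 (ofReal_sub_ne_zero (by simpa using (ha k).ne') t)

lemma norm_ofReal_sub_conj (c : ℂ) (t : ℝ) : ‖(t : ℂ) - conj c‖ = ‖(t : ℂ) - c‖ := by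
  rw [← Complex.norm_conj, map_sub, Complex.conj_ofReal, Complex.conj_conj]

lemma norm_sub_conj_le_norm_sub {z c : ℂ} (hz : z.im ≤ 0) (hc : 0 ≤ c.im) :
    ‖z - conj c‖ ≤ ‖z - c‖ := by
  rw [← sq_le_sq₀ (norm_nonneg _) (norm_nonneg _), Complex.sq_norm, Complex.sq_norm,
    Complex.normSq_apply, Complex.normSq_apply]
  simp only [Complex.sub_re, Complex.sub_im, Complex.conj_re, Complex.conj_im]
  nlinarith [mul_nonpos_of_nonneg_of_nonpos hc hz]

lemma norm_chi {k : ℕ} (ha2 : a k ^ 2 ≠ -1) : ‖chi a k‖ = 1 := by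
  have h : 1 + a k ^ 2 ≠ 0 := fun h => ha2 (by linear_combination h)
  rw [chi, norm_div, Complex.norm_real, norm_norm, div_self (norm_ne_zero_iff.2 h)]

lemma norm_Blaschke_ofReal (ha : ∀ k, 0 < (a k).im) (ha2 : ∀ k, a k ^ 2 ≠ -1) (j : ℕ) (t : ℝ) :
    ‖Blaschke a j t‖ = 1 := by
  rw [Blaschke, norm_prod]
  refine Finset.prod_eq_one fun k _ => ?_
  rw [norm_div, norm_mul, norm_chi (ha2 k), one_mul, norm_ofReal_sub_conj,
    div_self (norm_ne_zero_iff.2 (ofReal_sub_ne_zero (ha k).ne' t))]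

lemma continuous_Phi (ha : ∀ k, 0 < (a k).im) (j : ℕ) : Continuous fun t : ℝ => Phi a j t := by
  have hden : ∀ k, ∀ t : ℝ, (t : ℂ) - conj (a k) ≠ 0 := fun k =>
    ofReal_sub_ne_zero (by simpa using (ha k).ne')
  unfold Phi Blaschke
  fun_prop (disch := exact hden _)

lemma norm_sq_Phi_ofReal (ha : ∀ k, 0 < (a k).im) (ha2 : ∀ k, a k ^ 2 ≠ -1) (j : ℕ) (t : ℝ) :
    ‖Phi a j t‖ ^ 2 = (a j).im * (‖(t : ℂ) - a j‖ ^ 2)⁻¹ := by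
  rw [Phi, norm_div, norm_mul, norm_Blaschke_ofReal ha ha2, mul_one, Complex.norm_real,
    Real.norm_of_nonneg (Real.sqrt_nonneg _), norm_ofReal_sub_conj, div_pow,
    Real.sq_sqrt (ha j).le, div_eq_mul_inv]

lemma memLp_Phi (ha : ∀ k, 0 < (a k).im) (ha2 : ∀ k, a k ^ 2 ≠ -1) (j : ℕ) :
    MemLp (fun t : ℝ => Phi a j t) 2 :=
  memLp_two_of_norm_sq_le (continuous_Phi ha j) (ha j).ne' fun t =>
    (norm_sq_Phi_ofReal ha ha2 j t).le

lemma integral_Phi_mul_conj_self (ha : ∀ k, 0 < (a k).im) (ha2 : ∀ k, a k ^ 2 ≠ -1) (j : ℕ) :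
    ∫ t : ℝ, Phi a j t * conj (Phi a j t) = Real.pi := by
  simp_rw [Complex.mul_conj, Complex.normSq_eq_norm_sq, norm_sq_Phi_ofReal ha ha2]
  rw [integral_complex_ofReal, integral_const_mul, integral_inv_norm_sub_sq (ha j).ne',
    abs_of_pos (ha j)]
  congr 1
  field_simp [(ha j).ne']

/-- For `j < k`, the continuation of `t ↦ Φ_j(t) · conj (Φ_k(t))` off the real line; its poles
`a m` all lie in the upper half-plane. -/
noncomputable def PhiCross (a : ℕ → ℂ) (j k : ℕ) (z : ℂ) : ℂ :=
  (Real.sqrt (a j).im : ℂ) * Real.sqrt (a k).im / (chi a j * (z - a j) * (z - a k)) *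
    ∏ m ∈ Ico (j + 1) k, (z - conj (a m)) / (chi a m * (z - a m))

lemma Phi_mul_conj_Phi_eq_PhiCross (ha : ∀ k, 0 < (a k).im) (ha2 : ∀ k, a k ^ 2 ≠ -1)
    {j k : ℕ} (hjk : j < k) (t : ℝ) :
    Phi a j t * conj (Phi a k t) = PhiCross a j k t := by
  have hsub : ∀ m, (t : ℂ) - a m ≠ 0 := fun m => ofReal_sub_ne_zero (ha m).ne' t
  have hsub' : ∀ m, (t : ℂ) - conj (a m) ≠ 0 := fun m =>
    ofReal_sub_ne_zero (by simpa using (ha m).ne') t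
  have hchi : ∀ m, chi a m ≠ 0 := fun m => norm_ne_zero_iff.1 (by simp [norm_chi (ha2 m)])
  have hBj : Blaschke a j t ≠ 0 := norm_ne_zero_iff.1 (by simp [norm_Blaschke_ofReal ha ha2])
  -- on the real line `conj (B_k) = B_k⁻¹`, and `B_k = B_j * ∏_{j ≤ m < k} b_m`
  have hconj : conj (Blaschke a k t) = (Blaschke a j t)⁻¹ *
      ((t - conj (a j)) / (chi a j * (t - a j))) *
      ∏ m ∈ Ico (j + 1) k, (t - conj (a m)) / (chi a m * (t - a m)) := by
    rw [← Complex.inv_eq_conj (norm_Blaschke_ofReal ha ha2 k t), Blaschke,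
      ← prod_range_mul_prod_Ico _ hjk.le, prod_eq_prod_Ico_succ_bot hjk, ← Blaschke,
      mul_inv, mul_inv, ← prod_inv_distrib, mul_assoc]
    simp only [mul_inv, div_eq_inv_mul, inv_inv, mul_comm]
  rw [Phi, Phi, map_div₀, map_mul, hconj, Complex.conj_ofReal, map_sub, Complex.conj_ofReal,
    Complex.conj_conj, PhiCross]
  field_simp [hsub, hsub' j, hchi, hBj]

lemma differentiableAt_PhiCross (ha : ∀ k, 0 < (a k).im) (ha2 : ∀ k, a k ^ 2 ≠ -1)
    (j k : ℕ) {z : ℂ} (hz : z.im ≤ 0) : DifferentiableAt ℂ (PhiCross a j k) z := by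
  have hsub : ∀ m, z - a m ≠ 0 := fun m h => by
    have := congrArg Complex.im h
    simp only [Complex.sub_im, Complex.zero_im] at this
    linarith [ha m]
  have hchi : ∀ m, chi a m ≠ 0 := fun m => norm_ne_zero_iff.1 (by simp [norm_chi (ha2 m)])
  unfold PhiCross
  fun_prop (disch := simp [hsub, hchi])

lemma norm_PhiCross_le (ha : ∀ k, 0 < (a k).im) (ha2 : ∀ k, a k ^ 2 ≠ -1)
    (j k : ℕ) {z : ℂ} (hz : z.im ≤ 0) :
    ‖PhiCross a j k z‖ ≤ Real.sqrt (a j).im * Real.sqrt (a k).im / (‖z - a j‖ * ‖z - a k‖) := by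
  have hfactor : ∀ m, ‖(z - conj (a m)) / (chi a m * (z - a m))‖ ≤ 1 := fun m => by
    rw [norm_div, norm_mul, norm_chi (ha2 m), one_mul]
    exact div_le_one_of_le₀ (norm_sub_conj_le_norm_sub hz (ha m).le) (norm_nonneg _)
  rw [PhiCross, norm_mul, norm_div, norm_mul, norm_mul, norm_mul, norm_chi (ha2 j), one_mul,
    Complex.norm_real, Complex.norm_real, Real.norm_of_nonneg (Real.sqrt_nonneg _),
    Real.norm_of_nonneg (Real.sqrt_nonneg _), norm_prod]
  refine mul_le_of_le_one_right (by positivity) (prod_le_one (fun _ _ => norm_nonneg _)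
    fun m _ => hfactor m)

lemma half_norm_le_norm_sub {z c : ℂ} (h : 2 * ‖c‖ ≤ ‖z‖) : ‖z‖ / 2 ≤ ‖z - c‖ := by
  linarith [norm_sub_norm_le z c]

lemma integral_Phi_mul_conj_Phi_of_lt (ha : ∀ k, 0 < (a k).im) (ha2 : ∀ k, a k ^ 2 ≠ -1)
    {j k : ℕ} (hjk : j < k) : ∫ t : ℝ, Phi a j t * conj (Phi a k t) = 0 := by
  set D := Real.sqrt (a j).im * Real.sqrt (a k).im
  have hpt : ∀ t : ℝ, Phi a j t * conj (Phi a k t) = PhiCross a j k t :=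
    Phi_mul_conj_Phi_eq_PhiCross ha ha2 hjk
  have hint : Integrable fun t : ℝ => PhiCross a j k t :=
    ((memLp_Phi ha ha2 j).integrable_mul_conj (memLp_Phi ha ha2 k)).congr
      (Eventually.of_forall hpt)
  have hdecay : ∀ z : ℂ, z.im ≤ 0 → 2 * max ‖a j‖ ‖a k‖ ≤ ‖z‖ →
      ‖PhiCross a j k z‖ ≤ 4 * D / ‖z‖ ^ 2 := by
    intro z hz hzR
    have hj : ‖z‖ / 2 ≤ ‖z - a j‖ :=
      half_norm_le_norm_sub ((mul_le_mul_of_nonneg_left (le_max_left _ _) two_pos.le).trans hzR)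
    have hk : ‖z‖ / 2 ≤ ‖z - a k‖ :=
      half_norm_le_norm_sub ((mul_le_mul_of_nonneg_left (le_max_right _ _) two_pos.le).trans hzR)
    have hz0 : 0 < ‖z‖ := by
      have := norm_pos_iff.2 (fun h : a j = 0 => (ha j).ne' (by simp [h]))
      linarith [le_max_left ‖a j‖ ‖a k‖]
    calc ‖PhiCross a j k z‖ ≤ D / (‖z - a j‖ * ‖z - a k‖) := norm_PhiCross_le ha ha2 j k hz
      _ ≤ D / (‖z‖ / 2 * (‖z‖ / 2)) := by gcongr
      _ = 4 * D / ‖z‖ ^ 2 := by field_simp; ring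
  rw [integral_congr_ae (Eventually.of_forall hpt)]
  exact integral_eq_zero_of_lowerHalfPlane (fun z hz => differentiableAt_PhiCross ha ha2 j k hz)
    hint hdecay

theorem integral_Phi_mul_conj_Phi (ha : ∀ k, 0 < (a k).im) (ha2 : ∀ k, a k ^ 2 ≠ -1) (j k : ℕ) :
    ∫ t : ℝ, Phi a j t * conj (Phi a k t) = if j = k then (Real.pi : ℂ) else 0 := by
  rcases lt_trichotomy j k with hjk | rfl | hkj
  · rw [if_neg hjk.ne, integral_Phi_mul_conj_Phi_of_lt ha ha2 hjk]
  · rw [if_pos rfl, integral_Phi_mul_conj_self ha ha2]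
  · rw [if_neg hkj.ne', ← Complex.conj_conj (∫ t : ℝ, _), ← integral_conj]
    simp_rw [map_mul, Complex.conj_conj, mul_comm (conj (Phi a j _))]
    rw [integral_Phi_mul_conj_Phi_of_lt ha ha2 hkj, map_zero]

end Takenaka

section Numerators

open Polynomial

variable {a : ℕ → ℂ}

noncomputable def phiNumerator (a : ℕ → ℂ) (n j : ℕ) : ℂ[X] :=
  C (Real.sqrt (a j).im : ℂ) * (∏ m ∈ range j, C (chi a m) * (X - C (a m))) *
    ∏ m ∈ Ico (j + 1) n, (X - C (conj (a m)))

lemma phiNumerator_mem_degreeLT (a : ℕ → ℂ) {n j : ℕ} (hj : j < n) :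
    phiNumerator a n j ∈ degreeLT ℂ n := by
  have h₁ : (∏ m ∈ range j, C (chi a m) * (X - C (a m))).natDegree ≤ j :=
    (natDegree_prod_le _ _).trans <| (sum_le_card_nsmul _ _ 1 fun m _ =>
      (natDegree_C_mul_le _ _).trans (natDegree_X_sub_C_le _)).trans (by simp)
  have h₂ : (∏ m ∈ Ico (j + 1) n, (X - C (conj (a m)))).natDegree ≤ n - (j + 1) :=
    (natDegree_prod_le _ _).trans <| (sum_le_card_nsmul _ _ 1 fun m _ =>
      natDegree_X_sub_C_le _).trans (by simp)
  have h : (phiNumerator a n j).natDegree < n :=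
    ((natDegree_mul_le).trans (add_le_add ((natDegree_C_mul_le _ _).trans h₁) h₂)).trans_lt
      (by omega)
  rw [mem_degreeLT]
  exact (degree_le_natDegree).trans_lt (by exact_mod_cast h)

lemma eval_phiNumerator {n j : ℕ} (hj : j < n) {z : ℂ} (hz : ∀ k < n, z ≠ conj (a k)) :
    (phiNumerator a n j).eval z = tau n z (fun k => conj (a k)) * Phi a j z := by
  have hzk : ∀ k < n, z - conj (a k) ≠ 0 := fun k hk => sub_ne_zero.2 (hz k hk)
  have hrange : ∏ m ∈ range j, (z - conj (a m)) ≠ 0 :=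
    prod_ne_zero_iff.2 fun m hm => hzk m ((mem_range.1 hm).trans hj)
  simp only [phiNumerator, tau, Phi, Blaschke, eval_mul, eval_C, eval_prod, eval_sub, eval_X]
  rw [← prod_range_mul_prod_Ico _ hj.le, prod_eq_prod_Ico_succ_bot hj, prod_div_distrib]
  field_simp [hzk j hj]

lemma eval_sum_smul_phiNumerator {n : ℕ} (c : Fin n → ℂ) {z : ℂ}
    (hz : ∀ k < n, z ≠ conj (a k)) :
    (∑ i, c i • phiNumerator a n i).eval z =
      tau n z (fun k => conj (a k)) * ∑ i, c i * Phi a i z := by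
  simp only [eval_finsetSum, eval_smul, smul_eq_mul, mul_sum]
  exact sum_congr rfl fun i _ => by rw [eval_phiNumerator i.isLt hz]; ring

lemma linearIndependent_phiNumerator (ha : ∀ k, 0 < (a k).im) (ha2 : ∀ k, a k ^ 2 ≠ -1)
    (n : ℕ) : LinearIndependent ℂ fun i : Fin n => phiNumerator a n i := by
  refine Fintype.linearIndependent_iff.2 fun c hc i => ?_
  have hzero : ∀ t : ℝ, ∑ i, c i * Phi a i t = 0 := fun t => by
    have := congrArg (eval (t : ℂ)) hc
    rw [eval_sum_smul_phiNumerator c fun k _ => ofReal_ne_conj ha t k, eval_zero] at this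
    exact (mul_eq_zero.1 this).resolve_left (tau_conj_ofReal_ne_zero ha n t)
  have hcoef := integral_sum_mul_conj_of_orthogonal (φ := fun i : Fin n => fun t : ℝ => Phi a i t)
    (s := univ) (w := Real.pi) (fun i _ => memLp_Phi ha ha2 i)
    (fun i _ k _ => by simp only [integral_Phi_mul_conj_Phi ha ha2, Fin.val_inj]) c (mem_univ i)
  simp only [hzero, zero_mul, integral_zero] at hcoef
  exact (mul_eq_zero.1 hcoef.symm).resolve_right (Complex.ofReal_ne_zero.2 Real.pi_ne_zero)

lemma degree_sum_smul_phiNumerator_lt (a : ℕ → ℂ) {n : ℕ} (c : Fin n → ℂ) :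
    (∑ i, c i • phiNumerator a n i).degree < n :=
  mem_degreeLT.1 <| Submodule.sum_mem _ fun i _ =>
    Submodule.smul_mem _ _ (phiNumerator_mem_degreeLT a i.isLt)

theorem exists_sum_smul_phiNumerator_eq (ha : ∀ k, 0 < (a k).im) (ha2 : ∀ k, a k ^ 2 ≠ -1)
    {n : ℕ} {p : ℂ[X]} (hp : p.degree < n) :
    ∃ c : Fin n → ℂ, ∑ i, c i • phiNumerator a n i = p := by
  have hli := linearIndependent_phiNumerator ha ha2 n
  have hle : Submodule.span ℂ (Set.range fun i : Fin n => phiNumerator a n i) ≤ degreeLT ℂ n :=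
    Submodule.span_le.2 (Set.range_subset_iff.2 fun i => phiNumerator_mem_degreeLT a i.isLt)
  have hspan := Submodule.eq_of_le_of_finrank_eq hle (by
    rw [finrank_span_eq_card hli, (degreeLTEquiv ℂ n).finrank_eq, Module.finrank_fin_fun,
      Fintype.card_fin])
  exact (Submodule.mem_span_range_iff_exists_fun ℂ).1 (hspan ▸ mem_degreeLT.2 hp)

end Numerators

section Kernel

variable {a : ℕ → ℂ}

lemma norm_tau_conj_ofReal (a : ℕ → ℂ) (n : ℕ) (t : ℝ) :
    ‖tau n t (fun k => conj (a k))‖ = ‖tau n t a‖ := by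
  simp only [tau, norm_prod, norm_ofReal_sub_conj]

lemma prod_im_le_norm_tau_conj_ofReal (ha : ∀ k, 0 < (a k).im) (n : ℕ) (t : ℝ) :
    ∏ k ∈ range n, (a k).im ≤ ‖tau n t (fun k => conj (a k))‖ := by
  rw [tau, norm_prod]
  refine prod_le_prod (fun k _ => (ha k).le) fun k _ => ?_
  simpa using (le_abs_self _).trans (Complex.abs_im_le_norm ((t : ℂ) - conj (a k)))

lemma Kker_eq_tau_mul_Rker (ha : ∀ k, 0 < (a k).im) (A B : ℂ) (lam : ℝ) (n s : ℕ) (t : ℝ) :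
    Kker A B lam s t = tau n t (fun k => conj (a k)) * Rker A B lam n s a t := by
  rw [Kker, Rker, mul_div_assoc', mul_comm _ (tau _ _ _),
    mul_div_mul_left _ _ (tau_conj_ofReal_ne_zero ha n t)]

lemma sq_norm_add_mul_ofReal_le (A B : ℂ) {lam : ℝ} (hlam : 0 < lam) (t : ℝ) :
    ‖A + B * t‖ ^ 2 ≤ (‖A‖ ^ 2 / lam ^ 2 + ‖B‖ ^ 2) * (t ^ 2 + lam ^ 2) := by
  have h : ‖A + B * t‖ ≤ ‖A‖ / lam * lam + ‖B‖ * |t| := by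
    rw [div_mul_cancel₀ _ hlam.ne']
    simpa using norm_add_le A (B * t)
  calc ‖A + B * t‖ ^ 2 ≤ (‖A‖ / lam * lam + ‖B‖ * |t|) ^ 2 := by gcongr
    _ ≤ ((‖A‖ / lam) ^ 2 + ‖B‖ ^ 2) * (t ^ 2 + lam ^ 2) := by
      nlinarith [sq_nonneg (‖A‖ / lam * |t| - ‖B‖ * lam), sq_abs t]
    _ = _ := by rw [div_pow]

lemma sq_norm_Rker_ofReal_le (ha : ∀ k, 0 < (a k).im) (A B : ℂ) {lam : ℝ} (hlam : 0 < lam)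
    (n s : ℕ) (t : ℝ) :
    ‖Rker A B lam n s a t‖ ^ 2 ≤ (‖A‖ ^ 2 / lam ^ 2 + ‖B‖ ^ 2) /
      (lam ^ (2 * s) * ∏ k ∈ range n, (a k).im) ^ 2 * (‖(t : ℂ) - lam * I‖ ^ 2)⁻¹ := by
  set P := t ^ 2 + lam ^ 2
  have hP : 0 < P := by positivity
  have hden : lam ^ (2 * s) * P ≤ ‖((t : ℂ) ^ 2 + (lam : ℂ) ^ 2) ^ (s + 1)‖ := by
    rw [show (t : ℂ) ^ 2 + (lam : ℂ) ^ 2 = (P : ℂ) by push_cast [P]; ring, norm_pow,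
      Complex.norm_real, Real.norm_of_nonneg hP.le, pow_succ, pow_mul]
    gcongr
    linarith [sq_nonneg t]
  have hπ : 0 < ∏ k ∈ range n, (a k).im := prod_pos fun k _ => ha k
  have hnormP : ‖(t : ℂ) - lam * I‖ ^ 2 = P := by simp [sq_norm_ofReal_sub, P]
  rw [hnormP, Rker, norm_div, norm_mul, div_pow]
  calc _ ≤ (‖A‖ ^ 2 / lam ^ 2 + ‖B‖ ^ 2) * P /
        (lam ^ (2 * s) * P * ∏ k ∈ range n, (a k).im) ^ 2 := by
        gcongr
        · exact sq_norm_add_mul_ofReal_le A B hlam t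
        · exact prod_im_le_norm_tau_conj_ofReal ha n t
    _ = _ := by field_simp

lemma continuous_Rker (ha : ∀ k, 0 < (a k).im) (A B : ℂ) {lam : ℝ} (hlam : 0 < lam) (n s : ℕ) :
    Continuous fun t : ℝ => Rker A B lam n s a t := by
  have hQ : ∀ t : ℝ, ((t : ℂ) ^ 2 + (lam : ℂ) ^ 2) ^ (s + 1) ≠ 0 := fun t =>
    pow_ne_zero _ <| by exact_mod_cast (by positivity : t ^ 2 + lam ^ 2 ≠ 0)
  unfold Rker tau
  exact Continuous.div (by fun_prop) (by fun_prop) fun t =>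
    mul_ne_zero (hQ t) (tau_conj_ofReal_ne_zero ha n t)

lemma memLp_Rker (ha : ∀ k, 0 < (a k).im) (A B : ℂ) {lam : ℝ} (hlam : 0 < lam) (n s : ℕ) :
    MemLp (fun t : ℝ => Rker A B lam n s a t) 2 :=
  memLp_two_of_norm_sq_le (continuous_Rker ha A B hlam n s) (c := lam * I) (by simp [hlam.ne'])
    (sq_norm_Rker_ofReal_le ha A B hlam n s)

theorem integral_weighted_error_eq (ha : ∀ k, 0 < (a k).im) (A B : ℂ) (lam : ℝ) (n s : ℕ)
    (rho0 : ℂ) (G : ℝ → ℂ) :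
    ∫ t : ℝ, ‖Kker A B lam s t - tau n t (fun k => conj (a k)) * G t‖ ^ 2 /
        ‖rho0 * tau n t a‖ ^ 2 =
      (∫ t : ℝ, ‖Rker A B lam n s a t - G t‖ ^ 2) / ‖rho0‖ ^ 2 := by
  rw [← integral_div]
  refine integral_congr_ae (Eventually.of_forall fun t => ?_)
  have hτ : ‖tau n t a‖ ≠ 0 := by
    rw [← norm_tau_conj_ofReal]; exact norm_ne_zero_iff.2 (tau_conj_ofReal_ne_zero ha n t)
  simp only
  rw [Kker_eq_tau_mul_Rker ha A B lam n s, ← mul_sub, norm_mul, norm_mul,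
    norm_tau_conj_ofReal, mul_pow, mul_pow, mul_comm (‖rho0‖ ^ 2),
    mul_div_mul_left _ _ (pow_ne_zero 2 hτ)]

lemma integral_weighted_error_sum_smul_phiNumerator (ha : ∀ k, 0 < (a k).im) (A B : ℂ)
    (lam : ℝ) (s : ℕ) (rho0 : ℂ) {n : ℕ} (c : Fin n → ℂ) :
    ∫ t : ℝ, ‖Kker A B lam s t - (∑ i, c i • phiNumerator a n i).eval (t : ℂ)‖ ^ 2 /
        ‖rho0 * tau n t a‖ ^ 2 =
      (∫ t : ℝ, ‖Rker A B lam n s a t - ∑ i, c i * Phi a i t‖ ^ 2) / ‖rho0‖ ^ 2 := by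
  simp_rw [eval_sum_smul_phiNumerator c fun k _ => ofReal_ne_conj ha _ k]
  exact integral_weighted_error_eq ha A B lam n s rho0 _

lemma Sn_eq_sum_fin (A B : ℂ) (lam : ℝ) (n s : ℕ) (a : ℕ → ℂ) (z : ℂ) :
    Sn A B lam n s a z = ∑ i : Fin n,
      ((Real.pi : ℂ)⁻¹ * ∫ t : ℝ, Rker A B lam n s a t * conj (Phi a i t)) * Phi a i z := by
  simp only [Sn, one_div]
  exact (Fin.sum_univ_eq_sum_range (fun j => _ * Phi a j z) n).symm

theorem integral_norm_Rker_sub_Sn_sq_le (ha : ∀ k, 0 < (a k).im) (ha2 : ∀ k, a k ^ 2 ≠ -1)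
    (A B : ℂ) {lam : ℝ} (hlam : 0 < lam) {n : ℕ} (s : ℕ) (c : Fin n → ℂ) :
    ∫ t : ℝ, ‖Rker A B lam n s a t - Sn A B lam n s a t‖ ^ 2 ≤
      ∫ t : ℝ, ‖Rker A B lam n s a t - ∑ i, c i * Phi a i t‖ ^ 2 := by
  simp_rw [Sn_eq_sum_fin]
  exact integral_norm_sub_sum_sq_le_of_orthogonal (φ := fun i : Fin n => fun t : ℝ => Phi a i t)
    (Complex.ofReal_ne_zero.2 Real.pi_ne_zero) (memLp_Rker ha A B hlam n s)
    (fun i _ => memLp_Phi ha ha2 i)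
    (fun i _ k _ => by simp only [integral_Phi_mul_conj_Phi ha ha2, Fin.val_inj]) c

end Kernel

theorem stmt_6_general (A B lam : ℝ) (hlam : 0 < lam) (n s : ℕ)
    (a : ℕ → ℂ) (ha : ∀ k, 0 < (a k).im) (ha2 : ∀ k, a k ^ 2 ≠ -1)
    (rho0 : ℂ) :
    (∃ q : Polynomial ℂ, q.degree < (n : ℕ) ∧
      ∀ z : ℂ, (∀ k < n, z ≠ starRingEnd ℂ (a k)) →
        q.eval z = tau n z (fun k => starRingEnd ℂ (a k)) * Sn (A : ℂ) (B : ℂ) lam n s a z) ∧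
    (∫ t : ℝ, ‖Kker (A : ℂ) (B : ℂ) lam s t -
          tau n t (fun k => starRingEnd ℂ (a k)) * Sn (A : ℂ) (B : ℂ) lam n s a t‖ ^ 2 /
        ‖rho0 * tau n t a‖ ^ 2) =
      sInf {y : ℝ | ∃ p : Polynomial ℂ, p.degree < (n : ℕ) ∧
        y = ∫ t : ℝ, ‖Kker (A : ℂ) (B : ℂ) lam s t - p.eval (t : ℂ)‖ ^ 2 /
              ‖rho0 * tau n t a‖ ^ 2} := by
  set q := ∑ i : Fin n,
    ((Real.pi : ℂ)⁻¹ * ∫ t : ℝ, Rker A B lam n s a t * conj (Phi a i t)) • phiNumerator a n i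
  have hq : ∀ z : ℂ, (∀ k < n, z ≠ conj (a k)) →
      q.eval z = tau n z (fun k => conj (a k)) * Sn A B lam n s a z := fun z hz => by
    rw [eval_sum_smul_phiNumerator _ hz, Sn_eq_sum_fin]
  refine ⟨⟨q, degree_sum_smul_phiNumerator_lt a _, hq⟩, Eq.symm <| IsLeast.csInf_eq ⟨?_, ?_⟩⟩
  · refine ⟨q, degree_sum_smul_phiNumerator_lt a _, integral_congr_ae <| .of_forall fun t => ?_⟩
    simp only [hq t fun k _ => ofReal_ne_conj ha t k]
  · rintro y ⟨p, hp, rfl⟩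
    obtain ⟨c, rfl⟩ := exists_sum_smul_phiNumerator_eq ha ha2 hp
    rw [integral_weighted_error_eq ha, integral_weighted_error_sum_smul_phiNumerator ha]
    exact div_le_div_of_nonneg_right (integral_norm_Rker_sub_Sn_sq_le ha ha2 A B hlam s c)
      (sq_nonneg _)

/-- Theorem 2 (extremal polynomial): p_{n−1}^{(λ,s)}(z) := τ_n(z,ā) S_n(R_{n,s}^λ)(z)
coincides with a polynomial of degree ≤ n−1 (away from the points conj(a_k), where the
defining expression involves division by zero), and it attains the infimum defining the
best weighted approximation. -/
theorem stmt_6 (A B lam : ℝ) (hlam : 0 < lam) (n s : ℕ) (hn : 1 ≤ n) (hs : 1 ≤ s)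
    (a : ℕ → ℂ) (ha : ∀ k, 0 < (a k).im) (ha2 : ∀ k, a k ^ 2 ≠ -1)
    (rho0 : ℂ) (hrho0 : rho0 ≠ 0) :
    (∃ q : Polynomial ℂ, q.degree < (n : ℕ) ∧
      ∀ z : ℂ, (∀ k < n, z ≠ starRingEnd ℂ (a k)) →
        q.eval z = tau n z (fun k => starRingEnd ℂ (a k)) * Sn (A : ℂ) (B : ℂ) lam n s a z) ∧
    (∫ t : ℝ, ‖Kker (A : ℂ) (B : ℂ) lam s t -
          tau n t (fun k => starRingEnd ℂ (a k)) * Sn (A : ℂ) (B : ℂ) lam n s a t‖ ^ 2 /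
        ‖rho0 * tau n t a‖ ^ 2) =
      sInf {y : ℝ | ∃ p : Polynomial ℂ, p.degree < (n : ℕ) ∧
        y = ∫ t : ℝ, ‖Kker (A : ℂ) (B : ℂ) lam s t - p.eval (t : ℂ)‖ ^ 2 /
              ‖rho0 * tau n t a‖ ^ 2} :=
  stmt_6_general A B lam hlam n s a ha ha2 rho0
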